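/- arXiv:2604.12808 — 2 statements merged into one kernel-verified Lean document; each statement's English description precedes it below -/
import Mathlib

section
/- Let ρ_1,…,ρ_N be LDOI positive semidefinite matrices indexed by pairs, let p_1,…,p_N be nonnegative reals, and let (P_1,…,P_N) be a POVM in which every P_k is separable. Then (Φ(P_1),…,Φ(P_N)) is also a POVM in which every Φ(P_k) is separable, each Φ(P_k) is LDOI, and the success probability is unchanged: ∑_{k=1}^N p_k · Tr(Φ(P_k) ρ_k) = ∑_{k=1}^N p_k · Tr(P_k ρ_k). -/
open Matrix Kronecker BigOperators
open scoped ComplexOrder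

/-- The diagonal sign matrix `O_ε` with diagonal entries `±1` determined by `ε`. -/
noncomputable def signDiag (n : ℕ) (ε : Fin n → Bool) : Matrix (Fin n) (Fin n) ℂ :=
  Matrix.diagonal (fun i => if ε i then 1 else -1)

/-- The local diagonal orthogonal twirl
`Φ(A) = 2⁻ⁿ ∑_ε (O_ε ⊗ O_ε) A (O_ε ⊗ O_ε)`. -/
noncomputable def twirl {n : ℕ} (A : Matrix (Fin n × Fin n) (Fin n × Fin n) ℂ) :
    Matrix (Fin n × Fin n) (Fin n × Fin n) ℂ :=
  ((2 : ℂ) ^ n)⁻¹ • ∑ ε : Fin n → Bool,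
    (signDiag n ε ⊗ₖ signDiag n ε) * A * (signDiag n ε ⊗ₖ signDiag n ε)

/-- The partial transpose on the first factor: `T₁(M)_{(i,k),(j,l)} = M_{(j,k),(i,l)}`. -/
def ptranspose {n : ℕ} (M : Matrix (Fin n × Fin n) (Fin n × Fin n) ℂ) :
    Matrix (Fin n × Fin n) (Fin n × Fin n) ℂ :=
  Matrix.of fun p q => M (q.1, p.2) (p.1, q.2)

/-- A matrix on `ℂⁿ ⊗ ℂⁿ` is separable if it is a finite sum of Kronecker products of
positive semidefinite `n × n` matrices. -/
def SepOp {n : ℕ} (M : Matrix (Fin n × Fin n) (Fin n × Fin n) ℂ) : Prop :=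
  ∃ (N : ℕ) (Q R : Fin N → Matrix (Fin n) (Fin n) ℂ),
    (∀ t, (Q t).PosSemidef) ∧ (∀ t, (R t).PosSemidef) ∧ M = ∑ t, Q t ⊗ₖ R t

/-! Every `O_ε ⊗ O_ε` is a self-adjoint involution and these matrices form a group, so `Φ` is
the average of conjugations over a finite group: it is unital, positive, idempotent and
self-dual for the trace pairing. Conjugating `Q ⊗ R` by `O_ε ⊗ O_ε` gives
`(O_ε Q O_ε) ⊗ (O_ε R O_ε)`, so `Φ` also preserves separability. Hence `Φ` maps a separable
POVM to a separable LDOI POVM, and self-duality together with `Φ(ρ_k) = ρ_k` keeps the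
success probability. -/

namespace SepOp

variable {n : ℕ}

theorem zero : SepOp (0 : Matrix (Fin n × Fin n) (Fin n × Fin n) ℂ) :=
  ⟨0, Fin.elim0, Fin.elim0, nofun, nofun, by simp⟩

theorem add {A B : Matrix (Fin n × Fin n) (Fin n × Fin n) ℂ} (hA : SepOp A) (hB : SepOp B) :
    SepOp (A + B) := by
  obtain ⟨a, QA, RA, hQA, hRA, rfl⟩ := hA
  obtain ⟨b, QB, RB, hQB, hRB, rfl⟩ := hB
  refine ⟨a + b, Fin.append QA QB, Fin.append RA RB, ?_, ?_, ?_⟩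
  · simpa [Fin.forall_fin_add] using ⟨hQA, hQB⟩
  · simpa [Fin.forall_fin_add] using ⟨hRA, hRB⟩
  · simp [Fin.sum_univ_add]

theorem sum {ι : Type*} (s : Finset ι) {A : ι → Matrix (Fin n × Fin n) (Fin n × Fin n) ℂ}
    (hA : ∀ i ∈ s, SepOp (A i)) : SepOp (∑ i ∈ s, A i) :=
  Finset.sum_induction A SepOp (fun _ _ => add) zero hA

theorem smul {A : Matrix (Fin n × Fin n) (Fin n × Fin n) ℂ} (hA : SepOp A) {c : ℂ}
    (hc : 0 ≤ c) : SepOp (c • A) := by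
  obtain ⟨m, Q, R, hQ, hR, rfl⟩ := hA
  refine ⟨m, fun t => c • Q t, R, fun t => (hQ t).smul hc, hR, ?_⟩
  simp only [Finset.smul_sum, smul_kronecker]

theorem kronecker_mul_mul_conjTranspose {A : Matrix (Fin n × Fin n) (Fin n × Fin n) ℂ}
    (hA : SepOp A) (U V : Matrix (Fin n) (Fin n) ℂ) : SepOp ((U ⊗ₖ V) * A * (U ⊗ₖ V)ᴴ) := by
  obtain ⟨m, Q, R, hQ, hR, rfl⟩ := hA
  refine ⟨m, fun t => U * Q t * Uᴴ, fun t => V * R t * Vᴴ,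
    fun t => (hQ t).mul_mul_conjTranspose_same U,
    fun t => (hR t).mul_mul_conjTranspose_same V, ?_⟩
  simp only [Matrix.mul_sum, Matrix.sum_mul, conjTranspose_kronecker, mul_kronecker_mul]

end SepOp

section Twirl

variable {n : ℕ}

theorem signDiag_mul_signDiag (ε δ : Fin n → Bool) :
    signDiag n ε * signDiag n δ = signDiag n (fun i => ε i == δ i) := by
  have sign_mul_sign : ∀ a b : Bool,
      ((if a then 1 else -1) * if b then 1 else -1 : ℂ) = if a == b then 1 else -1 := by
    intro a b
    cases a <;> cases b <;> norm_num
  simp only [signDiag, diagonal_mul_diagonal, sign_mul_sign]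

theorem signDiag_mul_self (ε : Fin n → Bool) : signDiag n ε * signDiag n ε = 1 := by
  rw [signDiag_mul_signDiag]
  simp [signDiag]

theorem signDiag_isHermitian (ε : Fin n → Bool) : (signDiag n ε).IsHermitian := by
  rw [signDiag, isHermitian_diagonal_iff]
  intro i
  cases ε i <;> simp [IsSelfAdjoint.neg]

/-- The local sign unitary `O_ε ⊗ O_ε`. -/
noncomputable def signKron (n : ℕ) (ε : Fin n → Bool) :
    Matrix (Fin n × Fin n) (Fin n × Fin n) ℂ :=
  signDiag n ε ⊗ₖ signDiag n ε

theorem signKron_conjTranspose (ε : Fin n → Bool) : (signKron n ε)ᴴ = signKron n ε := by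
  rw [signKron, conjTranspose_kronecker, (signDiag_isHermitian ε).eq]

theorem signKron_mul_signKron (ε δ : Fin n → Bool) :
    signKron n ε * signKron n δ = signKron n (fun i => ε i == δ i) := by
  rw [signKron, signKron, signKron, ← mul_kronecker_mul, signDiag_mul_signDiag]

theorem signKron_mul_self (ε : Fin n → Bool) : signKron n ε * signKron n ε = 1 := by
  rw [signKron, ← mul_kronecker_mul, signDiag_mul_self, one_kronecker_one]

theorem twirl_eq_sum_signKron (A : Matrix (Fin n × Fin n) (Fin n × Fin n) ℂ) :
    twirl A = ((2 : ℂ) ^ n)⁻¹ • ∑ ε, signKron n ε * A * signKron n ε :=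
  rfl

theorem inv_two_pow_nonneg : (0 : ℂ) ≤ ((2 : ℂ) ^ n)⁻¹ := by
  positivity

theorem inv_two_pow_smul_sum_const {α : Type*} [AddCommGroup α] [Module ℂ α] (a : α) :
    ((2 : ℂ) ^ n)⁻¹ • ∑ _ε : Fin n → Bool, a = a := by
  rw [Finset.sum_const, Finset.card_univ, ← Nat.cast_smul_eq_nsmul ℂ, smul_smul]
  simp

theorem twirl_one : twirl (1 : Matrix (Fin n × Fin n) (Fin n × Fin n) ℂ) = 1 := by
  simp only [twirl_eq_sum_signKron, mul_one, signKron_mul_self, inv_two_pow_smul_sum_const]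

theorem twirl_sum {ι : Type*} (s : Finset ι) (A : ι → Matrix (Fin n × Fin n) (Fin n × Fin n) ℂ) :
    twirl (∑ i ∈ s, A i) = ∑ i ∈ s, twirl (A i) := by
  simp only [twirl_eq_sum_signKron, Finset.mul_sum, Finset.sum_mul, ← Finset.smul_sum]
  rw [Finset.sum_comm]

theorem twirl_posSemidef {A : Matrix (Fin n × Fin n) (Fin n × Fin n) ℂ} (hA : A.PosSemidef) :
    (twirl A).PosSemidef := by
  rw [twirl_eq_sum_signKron]
  refine PosSemidef.smul (posSemidef_sum _ fun ε _ => ?_) inv_two_pow_nonneg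
  simpa only [signKron_conjTranspose] using hA.mul_mul_conjTranspose_same (signKron n ε)

theorem twirl_sepOp {A : Matrix (Fin n × Fin n) (Fin n × Fin n) ℂ} (hA : SepOp A) :
    SepOp (twirl A) := by
  rw [twirl_eq_sum_signKron]
  refine SepOp.smul (SepOp.sum _ fun ε _ => ?_) inv_two_pow_nonneg
  simpa only [signKron, conjTranspose_kronecker, (signDiag_isHermitian ε).eq] using
    hA.kronecker_mul_mul_conjTranspose (signDiag n ε) (signDiag n ε)

theorem signKron_mul_twirl_mul_signKron (δ : Fin n → Bool)
    (A : Matrix (Fin n × Fin n) (Fin n × Fin n) ℂ) :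
    signKron n δ * twirl A * signKron n δ = twirl A := by
  have hinv : Function.Involutive fun (ε : Fin n → Bool) i => ε i == δ i :=
    fun ε => funext fun i => by simp
  rw [twirl_eq_sum_signKron, Matrix.mul_smul, Matrix.smul_mul, Finset.mul_sum, Finset.sum_mul]
  refine congrArg (((2 : ℂ) ^ n)⁻¹ • ·) (Fintype.sum_bijective _ hinv.bijective _ _ fun ε => ?_)
  calc signKron n δ * (signKron n ε * A * signKron n ε) * signKron n δ
      = (signKron n δ * signKron n ε) * A * (signKron n ε * signKron n δ) := by
        simp only [Matrix.mul_assoc]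
    _ = _ := by simp only [signKron_mul_signKron, Bool.beq_comm]

theorem twirl_twirl (A : Matrix (Fin n × Fin n) (Fin n × Fin n) ℂ) :
    twirl (twirl A) = twirl A := by
  conv_lhs => rw [twirl_eq_sum_signKron]
  simp only [signKron_mul_twirl_mul_signKron, inv_two_pow_smul_sum_const]

theorem trace_twirl_mul (A B : Matrix (Fin n × Fin n) (Fin n × Fin n) ℂ) :
    (twirl A * B).trace = (A * twirl B).trace := by
  simp only [twirl_eq_sum_signKron, Matrix.smul_mul, Matrix.mul_smul, trace_smul,
    Finset.sum_mul, Finset.mul_sum, trace_sum]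
  congr 1
  refine Finset.sum_congr rfl fun ε _ => ?_
  rw [Matrix.mul_assoc _ A, Matrix.mul_assoc, trace_mul_comm]
  simp only [Matrix.mul_assoc]

end Twirl

theorem twirl_sep_povm_general (n N : ℕ)
    (ρ : Fin N → Matrix (Fin n × Fin n) (Fin n × Fin n) ℂ)
    (hρldoi : ∀ k, twirl (ρ k) = ρ k)
    (p : Fin N → ℝ)
    (P : Fin N → Matrix (Fin n × Fin n) (Fin n × Fin n) ℂ)
    (hPpsd : ∀ k, (P k).PosSemidef) (hPsum : ∑ k, P k = 1)
    (hPsep : ∀ k, SepOp (P k)) :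
    (∑ k, twirl (P k) = 1) ∧
    (∀ k, (twirl (P k)).PosSemidef) ∧
    (∀ k, SepOp (twirl (P k))) ∧
    (∀ k, twirl (twirl (P k)) = twirl (P k)) ∧
    (∑ k, (p k : ℂ) * (twirl (P k) * ρ k).trace = ∑ k, (p k : ℂ) * (P k * ρ k).trace) := by
  refine ⟨?_, fun k => twirl_posSemidef (hPpsd k), fun k => twirl_sepOp (hPsep k),
    fun k => twirl_twirl (P k), ?_⟩
  · rw [← twirl_sum, hPsum, twirl_one]
  · simp only [trace_twirl_mul, hρldoi]

/-- Twirling a separable POVM for an ensemble of LDOI states gives a separable POVM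
consisting of LDOI operators with the same success probability. -/
theorem twirl_sep_povm (n N : ℕ) (hn : 2 ≤ n)
    (ρ : Fin N → Matrix (Fin n × Fin n) (Fin n × Fin n) ℂ)
    (hρpsd : ∀ k, (ρ k).PosSemidef) (hρldoi : ∀ k, twirl (ρ k) = ρ k)
    (p : Fin N → ℝ) (hp : ∀ k, 0 ≤ p k)
    (P : Fin N → Matrix (Fin n × Fin n) (Fin n × Fin n) ℂ)
    (hPpsd : ∀ k, (P k).PosSemidef) (hPsum : ∑ k, P k = 1)
    (hPsep : ∀ k, SepOp (P k)) :
    (∑ k, twirl (P k) = 1) ∧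
    (∀ k, (twirl (P k)).PosSemidef) ∧
    (∀ k, SepOp (twirl (P k))) ∧
    (∀ k, twirl (twirl (P k)) = twirl (P k)) ∧
    (∑ k, (p k : ℂ) * (twirl (P k) * ρ k).trace = ∑ k, (p k : ℂ) * (P k * ρ k).trace) :=
  twirl_sep_povm_general n N ρ hρldoi p P hPpsd hPsum hPsep
end

section
/- If some PPT POVM (P_{i,j})_{1≤i,j≤n} achieves perfect discrimination of the uniform ensemble over an orthonormal LDOI basis, i.e., (1/n²) ∑_{i,j=1}^n ⟨φ_{i,j}, P_{i,j} φ_{i,j}⟩ = 1, then every entry of U has magnitude 0 or 1 and max{|a_{i,j}|², |a_{j,i}|²} = 1 for all i ≠ j; that is, the basis consists entirely of product states. -/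
open Matrix Kronecker BigOperators
open scoped ComplexOrder

/-- The vectors of the orthonormal LDOI basis associated to `(U, A)`:
`φ_{i,i} = ∑_k u_{i,k} e_k ⊗ e_k`;
for `i < j`, `φ_{i,j} = a_{i,j} e_i ⊗ e_j + conj(a_{j,i}) e_j ⊗ e_i` and
`φ_{j,i} = a_{j,i} e_i ⊗ e_j − conj(a_{i,j}) e_j ⊗ e_i`. -/
noncomputable def ldoiBasis {n : ℕ} (U A : Matrix (Fin n) (Fin n) ℂ) (i j : Fin n) :
    (Fin n × Fin n) → ℂ :=
  if i = j then (fun p => if p.1 = p.2 then U i p.1 else 0)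
  else if i < j then
    (fun p => if p = (i, j) then A i j else if p = (j, i) then (starRingEnd ℂ) (A j i) else 0)
  else
    (fun p => if p = (j, i) then A i j else if p = (i, j) then -(starRingEnd ℂ) (A j i) else 0)

/-! Perfect discrimination of an orthonormal basis `(φ_q)` forces `⟨φ_q, P_r φ_q⟩ = δ_{q,r}`, hence
`P_r = φ_r φ_r*`. For a pure state `v`, the matrix `T₁(v v*)` has diagonal entries `|v(a,b)|²` and
`((a,b),(c,d))` entry `v(c,b) conj v(a,d)`; if it is positive semidefinite, then `v(a,b) = 0`
forces `v(c,b) v(a,d) = 0`. As `φ_{i,i}` vanishes off the diagonal, `u_{i,b} conj u_{i,a} = 0` for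
`a ≠ b`, so every row of `U` has a single nonzero entry; as `φ_{i,j}` (`i < j`) vanishes at `(i,i)`,
`a_{i,j} a_{j,i} = 0`. -/

namespace Matrix.PosSemidef

variable {𝕜 m : Type*} [RCLike 𝕜] [Fintype m] {Q : Matrix m m 𝕜}

lemma mulVec_eq_zero_of_re_dotProduct_eq_zero (hQ : Q.PosSemidef) {x : m → 𝕜}
    (hx : RCLike.re (star x ⬝ᵥ Q *ᵥ x) = 0) : Q *ᵥ x = 0 := by
  refine (hQ.dotProduct_mulVec_zero_iff x).mp (RCLike.ext ?_ ?_)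
  · simpa using hx
  · simpa using (RCLike.nonneg_iff.mp (hQ.dotProduct_mulVec_nonneg x)).2

lemma apply_eq_zero_of_diag_eq_zero [DecidableEq m] (hQ : Q.PosSemidef) {p : m}
    (hp : Q p p = 0) (q : m) : Q p q = 0 := by
  have hcol : Q *ᵥ Pi.single p 1 = 0 :=
    (hQ.dotProduct_mulVec_zero_iff _).mp (by simp [hp])
  rw [← hQ.1.apply, show Q q p = 0 by simpa using congrFun hcol q, star_zero]

end Matrix.PosSemidef

section PerfectDiscrimination

variable {𝕜 m : Type*} [RCLike 𝕜] [Fintype m] [DecidableEq m]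

theorem mulVec_eq_zero_of_sum_re_dotProduct_eq_card {P : m → Matrix m m 𝕜}
    (hP : ∀ r, (P r).PosSemidef) (hsum : ∑ r, P r = 1) {φ : m → m → 𝕜}
    (hφ : ∀ q, star (φ q) ⬝ᵥ φ q = 1)
    (hperfect : ∑ q, RCLike.re (star (φ q) ⬝ᵥ P q *ᵥ φ q) = Fintype.card m)
    {q r : m} (hrq : r ≠ q) : P r *ᵥ φ q = 0 := by
  set G : m → m → ℝ := fun q r => RCLike.re (star (φ q) ⬝ᵥ P r *ᵥ φ q)
  have hG_nonneg : ∀ q r, 0 ≤ G q r := fun q r => (hP r).re_dotProduct_nonneg (φ q)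
  have hG_sum : ∀ q, ∑ r, G q r = 1 := fun q => by
    rw [← map_sum, ← dotProduct_sum, ← sum_mulVec, hsum, one_mulVec, hφ, RCLike.one_re]
  have hG_off : ∑ q, ∑ r ∈ Finset.univ.erase q, G q r = 0 := by
    simp_rw [Finset.sum_erase_eq_sub (Finset.mem_univ _), Finset.sum_sub_distrib, hG_sum]
    simp [G, hperfect]
  have hq := (Finset.sum_eq_zero_iff_of_nonneg fun q _ => Finset.sum_nonneg fun r _ =>
    hG_nonneg q r).mp hG_off q (Finset.mem_univ q)
  exact (hP r).mulVec_eq_zero_of_re_dotProduct_eq_zero <|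
    (Finset.sum_eq_zero_iff_of_nonneg fun r _ => hG_nonneg q r).mp hq r
      (Finset.mem_erase.mpr ⟨hrq, Finset.mem_univ r⟩)

theorem sum_vecMulVec_star_self_eq_one {φ : m → m → 𝕜}
    (hφ : ∀ q r, star (φ q) ⬝ᵥ φ r = if q = r then 1 else 0) :
    ∑ q, vecMulVec (φ q) (star (φ q)) = 1 := by
  set Φ : Matrix m m 𝕜 := of fun p q => φ q p
  have hΦ : Φᴴ * Φ = 1 := by
    ext q r
    simpa [Φ, mul_apply, dotProduct, one_apply] using hφ q r
  have hΦ' : Φ * Φᴴ = 1 := mul_eq_one_comm.mp hΦ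
  ext p p'
  simpa [Φ, mul_apply, vecMulVec_apply, Matrix.sum_apply] using congr_fun₂ hΦ' p p'

theorem eq_vecMulVec_of_mulVec_eq {φ : m → m → 𝕜}
    (hφ : ∑ q, vecMulVec (φ q) (star (φ q)) = 1) {M : Matrix m m 𝕜} {r : m}
    (hr : M *ᵥ φ r = φ r) (hq : ∀ q, q ≠ r → M *ᵥ φ q = 0) :
    M = vecMulVec (φ r) (star (φ r)) :=
  calc M = M * ∑ q, vecMulVec (φ q) (star (φ q)) := by rw [hφ, mul_one]
    _ = ∑ q, vecMulVec (M *ᵥ φ q) (star (φ q)) := by simp only [Finset.mul_sum, mul_vecMulVec]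
    _ = vecMulVec (φ r) (star (φ r)) := by
      rw [Finset.sum_eq_single r (fun q _ hqr => by simp [hq q hqr]) (by simp), hr]

theorem eq_vecMulVec_of_sum_re_dotProduct_eq_card {P : m → Matrix m m 𝕜}
    (hP : ∀ r, (P r).PosSemidef) (hsum : ∑ r, P r = 1) {φ : m → m → 𝕜}
    (hφ : ∀ q r, star (φ q) ⬝ᵥ φ r = if q = r then 1 else 0)
    (hperfect : ∑ q, RCLike.re (star (φ q) ⬝ᵥ P q *ᵥ φ q) = Fintype.card m) (r : m) :
    P r = vecMulVec (φ r) (star (φ r)) := by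
  have hkill : ∀ q r, r ≠ q → P r *ᵥ φ q = 0 := fun q r hrq =>
    mulVec_eq_zero_of_sum_re_dotProduct_eq_card hP hsum (fun q => by simpa using hφ q q)
      hperfect hrq
  refine eq_vecMulVec_of_mulVec_eq (sum_vecMulVec_star_self_eq_one hφ) ?_
    fun q hqr => hkill q r hqr.symm
  calc P r *ᵥ φ r = ∑ s, P s *ᵥ φ r := (Finset.sum_eq_single r (fun s _ hsr => hkill r s hsr)
        (by simp)).symm
    _ = φ r := by rw [← sum_mulVec, hsum, one_mulVec]

end PerfectDiscrimination

lemma star_dotProduct_eq_zero_of_disjoint {𝕜 m : Type*} [RCLike 𝕜] [Fintype m] {v w : m → 𝕜}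
    (h : ∀ p, v p = 0 ∨ w p = 0) : star v ⬝ᵥ w = 0 :=
  Finset.sum_eq_zero fun p _ => by rcases h p with h | h <;> simp [h]

lemma mul_star_eq_zero_of_ptranspose_vecMulVec {n : ℕ} {v : Fin n × Fin n → ℂ}
    (hv : (ptranspose (vecMulVec v (star v))).PosSemidef) {a b : Fin n} (hab : v (a, b) = 0)
    (c d : Fin n) : v (c, b) * star (v (a, d)) = 0 := by
  simpa [ptranspose, vecMulVec_apply] using
    hv.apply_eq_zero_of_diag_eq_zero (p := (a, b)) (by simp [ptranspose, vecMulVec_apply, hab])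
      (c, d)

section Ldoi

variable {n : ℕ} {U A : Matrix (Fin n) (Fin n) ℂ}

lemma ldoiBasis_self (i : Fin n) :
    ldoiBasis U A i i = fun p => if p.1 = p.2 then U i p.1 else 0 := by
  simp [ldoiBasis]

lemma ldoiBasis_of_lt {i j : Fin n} (h : i < j) :
    ldoiBasis U A i j = Pi.single (i, j) (A i j) + Pi.single (j, i) (starRingEnd ℂ (A j i)) := by
  ext p
  simp only [ldoiBasis, h.ne, h, if_false, if_true, Pi.add_apply, Pi.single_apply]
  split_ifs with h₁ h₂
  · exact absurd (congrArg Prod.fst (h₁.symm.trans h₂)) h.ne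
  all_goals simp

lemma ldoiBasis_of_gt {i j : Fin n} (h : j < i) :
    ldoiBasis U A i j = Pi.single (j, i) (A i j) - Pi.single (i, j) (starRingEnd ℂ (A j i)) := by
  ext p
  simp only [ldoiBasis, h.ne', not_lt_of_gt h, if_false, Pi.sub_apply, Pi.single_apply]
  split_ifs with h₁ h₂
  · exact absurd (congrArg Prod.fst (h₁.symm.trans h₂)) h.ne
  all_goals simp

lemma ldoiBasis_self_apply_of_ne (i : Fin n) {p : Fin n × Fin n} (hp : p.1 ≠ p.2) :
    ldoiBasis U A i i p = 0 := by
  simp [ldoiBasis_self, hp]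

lemma ldoiBasis_apply_of_ne {i j : Fin n} (hij : i ≠ j) {p : Fin n × Fin n}
    (h₁ : p ≠ (i, j)) (h₂ : p ≠ (j, i)) : ldoiBasis U A i j p = 0 := by
  rcases hij.lt_or_gt with h | h
  · simp [ldoiBasis_of_lt h, h₁, h₂]
  · simp [ldoiBasis_of_gt h, h₁, h₂]

lemma conj_mul_add_conj_mul_eq_one (hA : ∀ i j : Fin n, i ≠ j → ‖A i j‖ ^ 2 + ‖A j i‖ ^ 2 = 1)
    {i j : Fin n} (hij : i ≠ j) :
    starRingEnd ℂ (A i j) * A i j + starRingEnd ℂ (A j i) * A j i = 1 := by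
  simp only [Complex.conj_mul']
  exact_mod_cast hA i j hij

lemma star_ldoiBasis_dotProduct_self_of_ne
    (hA : ∀ i j : Fin n, i ≠ j → ‖A i j‖ ^ 2 + ‖A j i‖ ^ 2 = 1) {i j : Fin n} (hij : i ≠ j) :
    star (ldoiBasis U A i j) ⬝ᵥ ldoiBasis U A i j = 1 := by
  have := conj_mul_add_conj_mul_eq_one hA hij
  rcases hij.lt_or_gt with h | h
  · simp [ldoiBasis_of_lt h, h.ne, h.ne']
    linear_combination this
  · simp [ldoiBasis_of_gt h, h.ne, h.ne']
    linear_combination this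

lemma star_ldoiBasis_dotProduct_swap {i j : Fin n} (hij : i ≠ j) :
    star (ldoiBasis U A i j) ⬝ᵥ ldoiBasis U A j i = 0 := by
  rcases hij.lt_or_gt with h | h
  · simp [ldoiBasis_of_lt h, ldoiBasis_of_gt h, h.ne, h.ne']
    ring
  · simp [ldoiBasis_of_lt h, ldoiBasis_of_gt h, h.ne, h.ne']
    ring

lemma star_ldoiBasis_diag_dotProduct_diag (hU : U * Uᴴ = 1) (i k : Fin n) :
    star (ldoiBasis U A i i) ⬝ᵥ ldoiBasis U A k k = if i = k then 1 else 0 := by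
  have h := congr_fun₂ hU k i
  simp only [mul_apply, conjTranspose_apply, one_apply, Complex.star_def] at h
  simp only [ldoiBasis_self, dotProduct, Fintype.sum_prod_type, Pi.star_apply]
  simpa [apply_ite star, mul_comm, eq_comm] using h.symm

theorem ldoiBasis_orthonormal (hU : U * Uᴴ = 1)
    (hA : ∀ i j : Fin n, i ≠ j → ‖A i j‖ ^ 2 + ‖A j i‖ ^ 2 = 1) (q r : Fin n × Fin n) :
    star (ldoiBasis U A q.1 q.2) ⬝ᵥ ldoiBasis U A r.1 r.2 = if q = r then 1 else 0 := by
  obtain ⟨i, j⟩ := q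
  obtain ⟨k, l⟩ := r
  rcases eq_or_ne i j with rfl | hij <;> rcases eq_or_ne k l with rfl | hkl
  · simpa using star_ldoiBasis_diag_dotProduct_diag (A := A) hU i k
  · rw [if_neg (by grind), star_dotProduct_eq_zero_of_disjoint fun p => ?_]
    by_cases hp : p.1 = p.2
    · exact .inr (ldoiBasis_apply_of_ne hkl (by grind) (by grind))
    · exact .inl (ldoiBasis_self_apply_of_ne i hp)
  · rw [if_neg (by grind), star_dotProduct_eq_zero_of_disjoint fun p => ?_]
    by_cases hp : p.1 = p.2
    · exact .inl (ldoiBasis_apply_of_ne hij (by grind) (by grind))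
    · exact .inr (ldoiBasis_self_apply_of_ne k hp)
  · by_cases h₁ : (k, l) = (i, j)
    · simp_all [star_ldoiBasis_dotProduct_self_of_ne hA hij]
    by_cases h₂ : (k, l) = (j, i)
    · simp_all [star_ldoiBasis_dotProduct_swap hij]
    rw [if_neg (Ne.symm h₁), star_dotProduct_eq_zero_of_disjoint fun p => ?_]
    by_cases hp : p = (i, j) ∨ p = (j, i)
    · exact .inr (ldoiBasis_apply_of_ne hkl (by grind) (by grind))
    · exact .inl (ldoiBasis_apply_of_ne hij (by grind) (by grind))

lemma mul_star_eq_zero_of_ptranspose_ldoiBasis_self {i : Fin n}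
    (h : (ptranspose (vecMulVec (ldoiBasis U A i i) (star (ldoiBasis U A i i)))).PosSemidef)
    {a b : Fin n} (hab : a ≠ b) : U i b * star (U i a) = 0 := by
  simpa [ldoiBasis_self] using
    mul_star_eq_zero_of_ptranspose_vecMulVec h (ldoiBasis_self_apply_of_ne i hab) b a

lemma mul_eq_zero_of_ptranspose_ldoiBasis {i j : Fin n}
    (h : (ptranspose (vecMulVec (ldoiBasis U A i j) (star (ldoiBasis U A i j)))).PosSemidef)
    (hij : i < j) : A i j * A j i = 0 := by
  have hii : ldoiBasis U A i j (i, i) = 0 :=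
    ldoiBasis_apply_of_ne hij.ne (by simp [hij.ne]) (by simp [hij.ne])
  have := mul_star_eq_zero_of_ptranspose_vecMulVec h hii j j
  rw [mul_comm]
  simpa [ldoiBasis_of_lt hij, hij.ne, hij.ne'] using this

end Ldoi

lemma norm_eq_zero_or_one_of_mul_star_eq_zero {𝕜 m : Type*} [RCLike 𝕜] [Fintype m]
    {x : m → 𝕜} (hx : x ⬝ᵥ star x = 1) (horth : ∀ a b, a ≠ b → x b * star (x a) = 0) (a : m) :
    ‖x a‖ = 0 ∨ ‖x a‖ = 1 := by
  by_cases h0 : x a = 0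
  · simp [h0]
  have hrest : ∀ b, b ≠ a → x b = 0 := fun b hb =>
    (mul_eq_zero.mp (horth a b hb.symm)).resolve_right (by simpa using h0)
  rw [dotProduct, Finset.sum_eq_single a (fun b _ hb => by simp [hrest b hb]) (by simp),
    Pi.star_apply, RCLike.star_def, RCLike.mul_conj] at hx
  exact .inr ((pow_eq_one_iff_of_nonneg (norm_nonneg _) two_ne_zero).mp (by exact_mod_cast hx))

lemma max_sq_norm_eq_one_of_mul_eq_zero {R : Type*} [NormedRing R] [NoZeroDivisors R] {x y : R}
    (h : ‖x‖ ^ 2 + ‖y‖ ^ 2 = 1) (hxy : x * y = 0) : max (‖x‖ ^ 2) (‖y‖ ^ 2) = 1 := by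
  rcases mul_eq_zero.mp hxy with rfl | rfl <;> simp_all

theorem ppt_perfect_implies_product_general (n : ℕ) (U A : Matrix (Fin n) (Fin n) ℂ)
    (hU : Uᴴ * U = 1)
    (hA : ∀ i j : Fin n, i ≠ j → ‖A i j‖ ^ 2 + ‖A j i‖ ^ 2 = 1)
    (P : Fin n → Fin n → Matrix (Fin n × Fin n) (Fin n × Fin n) ℂ)
    (hPpsd : ∀ i j, (P i j).PosSemidef) (hPsum : ∑ i, ∑ j, P i j = 1)
    (hPppt : ∀ i j, (ptranspose (P i j)).PosSemidef)
    (hperfect : (1 / (n : ℝ) ^ 2) *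
        ∑ i, ∑ j, (star (ldoiBasis U A i j) ⬝ᵥ (P i j *ᵥ ldoiBasis U A i j)).re = 1) :
    (∀ k i : Fin n, ‖U k i‖ = 0 ∨ ‖U k i‖ = 1) ∧
    (∀ i j : Fin n, i ≠ j →
      max (‖A i j‖ ^ 2) (‖A j i‖ ^ 2) = 1) := by
  have hU' : U * Uᴴ = 1 := mul_eq_one_comm.mp hU
  have hcard : ∑ q : Fin n × Fin n,
      (star (ldoiBasis U A q.1 q.2) ⬝ᵥ (P q.1 q.2 *ᵥ ldoiBasis U A q.1 q.2)).re =
        Fintype.card (Fin n × Fin n) := by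
    rcases eq_or_ne (n : ℝ) 0 with hn | hn
    · simp [hn] at hperfect -- `1 / 0 = 0` makes `hperfect` false
    · field_simp at hperfect
      simp [Fintype.sum_prod_type, hperfect, sq]
  have hrank : ∀ i j, P i j = vecMulVec (ldoiBasis U A i j) (star (ldoiBasis U A i j)) :=
    fun i j => eq_vecMulVec_of_sum_re_dotProduct_eq_card (P := fun q => P q.1 q.2)
      (fun q => hPpsd _ _) (by rw [Fintype.sum_prod_type]; exact hPsum)
      (ldoiBasis_orthonormal hU' hA) hcard (i, j)
  have hpure : ∀ i j, (ptranspose (vecMulVec (ldoiBasis U A i j)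
      (star (ldoiBasis U A i j)))).PosSemidef := fun i j => hrank i j ▸ hPppt i j
  refine ⟨fun k => norm_eq_zero_or_one_of_mul_star_eq_zero ?_
    fun a b hab => mul_star_eq_zero_of_ptranspose_ldoiBasis_self (hpure k k) hab,
    fun i j hij => ?_⟩
  · simpa [mul_apply, dotProduct, conjTranspose_apply] using congr_fun₂ hU' k k
  rcases hij.lt_or_gt with h | h
  · exact max_sq_norm_eq_one_of_mul_eq_zero (hA i j hij)
      (mul_eq_zero_of_ptranspose_ldoiBasis (hpure i j) h)
  · rw [max_comm]
    exact max_sq_norm_eq_one_of_mul_eq_zero (hA j i h.ne)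
      (mul_eq_zero_of_ptranspose_ldoiBasis (hpure j i) h)

/-- If some PPT POVM achieves perfect discrimination of the uniform ensemble over an
orthonormal LDOI basis, then every entry of `U` has magnitude `0` or `1` and
`max{|a_{i,j}|², |a_{j,i}|²} = 1` for all `i ≠ j`; that is, the basis consists entirely of
product states. -/
theorem ppt_perfect_implies_product (n : ℕ) (hn : 2 ≤ n) (U A : Matrix (Fin n) (Fin n) ℂ)
    (hU : Uᴴ * U = 1)
    (hA : ∀ i j : Fin n, i ≠ j → ‖A i j‖ ^ 2 + ‖A j i‖ ^ 2 = 1)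
    (P : Fin n → Fin n → Matrix (Fin n × Fin n) (Fin n × Fin n) ℂ)
    (hPpsd : ∀ i j, (P i j).PosSemidef) (hPsum : ∑ i, ∑ j, P i j = 1)
    (hPppt : ∀ i j, (ptranspose (P i j)).PosSemidef)
    (hperfect : (1 / (n : ℝ) ^ 2) *
        ∑ i, ∑ j, (star (ldoiBasis U A i j) ⬝ᵥ (P i j *ᵥ ldoiBasis U A i j)).re = 1) :
    (∀ k i : Fin n, ‖U k i‖ = 0 ∨ ‖U k i‖ = 1) ∧
    (∀ i j : Fin n, i ≠ j →
      max (‖A i j‖ ^ 2) (‖A j i‖ ^ 2) = 1) :=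
  ppt_perfect_implies_product_general n U A hU hA P hPpsd hPsum hPppt hperfect
end
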